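/- Let b ≥ 2 and n ≥ 1 be integers, let R_n be a generalized Hammersley point set, let j₁ ∈ ℕ₀ with j₁ ≤ n − 1, m₁ ∈ {0,…,b^{j₁}−1} and ℓ₁ ∈ {1,…,b−1}. For z ∈ R_n with z₁ ∈ I_{j₁,m₁}, let k₁(z) ∈ {0,…,b−1} be the unique digit with z₁ ∈ [b^{−j₁−1}(bm₁+k₁(z)), b^{−j₁−1}(bm₁+k₁(z)+1)). Write S := ∑_{z ∈ R_n, z₁ ∈ I_{j₁,m₁}} [(bm₁+k₁(z)+1−b^{j₁+1}z₁)·exp(2πik₁(z)ℓ₁/b) + ∑_{r₁=k₁(z)+1}^{b−1} exp(2πir₁ℓ₁/b)] · (1 − z₂) and e := exp(2πiℓ₁/b). Then there exists a real number ε with 0 ≤ ε and ε·b^{n−j₁} ≤ b such that either S = (b^{n−j₁}(1−2ε) − b^{j₁−n+1})/(2(e−1)) + e/(e−1)², or S = (b^{n−j₁}(1−2ε) + b^{j₁−n+1})/(2(e−1)) − 1/(e−1)². -/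

import Mathlib

open scoped Classical
open Finset

/-- `bexp b ℓ k = exp(2πiℓk/b)`. -/
noncomputable def bexp (b ℓ k : ℕ) : ℂ :=
  Complex.exp (2 * Real.pi * Complex.I * ℓ * k / b)

/-- First coordinate of the generalized Hammersley point: `z₁ = tₙ/b + ⋯ + t₁/bⁿ`. -/
noncomputable def z1 (b n : ℕ) (t : Fin n → Fin b) : ℝ :=
  ∑ i : Fin n, ((t i : ℕ) : ℝ) / (b:ℝ) ^ (n - (i:ℕ))

/-- Second coordinate: `z₂ = s₁(t₁)/b + s₂(t₂)/b² + ⋯ + sₙ(tₙ)/bⁿ`. -/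
noncomputable def z2 (b n : ℕ) (s : Fin n → ℕ → ℕ) (t : Fin n → Fin b) : ℝ :=
  ∑ i : Fin n, ((s i (t i : ℕ) : ℕ) : ℝ) / (b:ℝ) ^ ((i:ℕ) + 1)

/-- Each `s i` is either the identity or the reflection `t ↦ b−1−t` on digits. -/
def IsDigitMaps (b n : ℕ) (s : Fin n → ℕ → ℕ) : Prop :=
  ∀ i, (∀ k, k < b → s i k = k) ∨ (∀ k, k < b → s i k = b - 1 - k)

/-- The unique digit `k ∈ {0,…,b−1}` with `x ∈ [b^{−j−1}(bm+k), b^{−j−1}(bm+k+1))`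
(for `x ∈ I_{j,m}`): `k = ⌊b^{j+1}x⌋ mod b`. -/
noncomputable def kdig (b j : ℕ) (x : ℝ) : ℕ := (⌊(b:ℝ) ^ (j + 1) * x⌋).toNat % b

/-- The sum `S` of Lemma 4.10: over all points `z` of the generalized Hammersley point set
with `z₁ ∈ I_{j₁,m₁}`, of `[(bm₁+k₁(z)+1−b^{j₁+1}z₁)·e(k₁(z)ℓ₁) + ∑_{r₁>k₁(z)} e(r₁ℓ₁)]·(1−z₂)`. -/
noncomputable def S13 (b n : ℕ) (s : Fin n → ℕ → ℕ) (j₁ m₁ ℓ₁ : ℕ) : ℂ :=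
  ∑ t ∈ Finset.univ.filter (fun t : Fin n → Fin b =>
      (b:ℝ)^(-(j₁:ℤ)) * m₁ ≤ z1 b n t ∧ z1 b n t < (b:ℝ)^(-(j₁:ℤ)) * (m₁ + 1)),
    (((b:ℂ)*m₁ + (kdig b j₁ (z1 b n t) : ℂ) + 1 - (b:ℂ)^(j₁+1) * (z1 b n t : ℝ)) *
        bexp b ℓ₁ (kdig b j₁ (z1 b n t)) +
       ∑ r₁ ∈ Finset.Icc (kdig b j₁ (z1 b n t) + 1) (b-1), bexp b ℓ₁ r₁) *
      (1 - ((z2 b n s t : ℝ) : ℂ))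

/-!
Encode a point by the integer `N = t₁ + t₂ b + ⋯ + tₙ b^{n-1}`, so that `z₁ = N / bⁿ`, and write
`n = g + 1 + j₁`. The condition `z₁ ∈ I_{j₁,m₁}` says `N = b^{g+1} m₁ + b^g k + M` with `k < b` and
`M < b^g`; then `k₁(z) = k`, `b^{j₁+1} z₁ = b m₁ + k + M / b^g`, and `z₂` splits into the `z₂` of
the low digits of `M`, the term `s_{g+1}(k) / b^{g+1}`, and a constant `ε` coming from the digits
of `m₁`. Summing over `k` first, every term carrying the factor `∑ₖ eᵏ = 0` drops out. What remains
is computed from `∑ₖ k eᵏ = b / (e - 1)`, from `s_{g+1}` permuting the digits (so that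
`∑ₖ eᵏ s_{g+1}(k) = ± b / (e - 1)`, the sign distinguishing identity from reflection, which
selects the alternative), and from `∑ z₂ = (b^g - 1) / 2` over a full set of `b^g` points,
obtained by pairing each point with its digitwise complement `t ↦ b - 1 - t`.
-/

section RootOfUnity

variable {K : Type*} [Field K] {b : ℕ} {x : K}

theorem geom_sum_eq_zero_of_pow_eq_one (hx : x ^ b = 1) (hx1 : x ≠ 1) :
    ∑ k ∈ range b, x ^ k = 0 := by
  rw [geom_sum_eq hx1, hx, sub_self, zero_div]

theorem sub_one_mul_sum_range_mul_pow (x : K) (m : ℕ) :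
    (x - 1) * ∑ k ∈ range m, (k : K) * x ^ k = m * x ^ m - x * ∑ k ∈ range m, x ^ k := by
  induction m with
  | zero => simp
  | succ m ih =>
    rw [sum_range_succ, sum_range_succ, mul_add, ih]
    push_cast
    ring

theorem sum_range_mul_pow_of_pow_eq_one (hx : x ^ b = 1) (hx1 : x ≠ 1) :
    ∑ k ∈ range b, (k : K) * x ^ k = b / (x - 1) := by
  rw [eq_div_iff (sub_ne_zero.mpr hx1), mul_comm, sub_one_mul_sum_range_mul_pow,
    geom_sum_eq_zero_of_pow_eq_one hx hx1, hx]
  ring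

theorem sum_Icc_pow_of_pow_eq_one (hx : x ^ b = 1) (hx1 : x ≠ 1) {k : ℕ} (hk : k < b) :
    ∑ r ∈ Icc (k + 1) (b - 1), x ^ r = (1 - x ^ (k + 1)) / (x - 1) := by
  rw [← Finset.Ico_add_one_right_eq_Icc, Nat.sub_add_cancel (by omega), geom_sum_Ico hx1 hk, hx]

theorem sum_range_one_sub_pow_succ_div (hx : x ^ b = 1) (hx1 : x ≠ 1) :
    ∑ k ∈ range b, (1 - x ^ (k + 1)) / (x - 1) = b / (x - 1) := by
  simp only [pow_succ, ← sum_div, sum_sub_distrib, ← sum_mul,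
    geom_sum_eq_zero_of_pow_eq_one hx hx1]
  simp

end RootOfUnity

section MixedSum

variable {K : Type*} [Field K] [CharZero K]

theorem sum_range_natCast (q : ℕ) : ∑ M ∈ range q, (M : K) = q * (q - 1) / 2 := by
  have h := congrArg (Nat.cast : ℕ → K) (sum_range_id_mul_two q)
  rcases q with _ | q
  · simp
  · push_cast at h
    rw [eq_div_iff two_ne_zero, h]
    push_cast
    ring

theorem sum_range_sum_range_mixed_eq {b q : ℕ} {x : K} (hx : x ^ b = 1) (hx1 : x ≠ 1)
    (hq : (q : K) ≠ 0) (C : K) (Z w : ℕ → K) :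
    ∑ k ∈ range b, ∑ M ∈ range q, ((1 - M / q) * x ^ k + (1 - x ^ (k + 1)) / (x - 1)) *
        (C - Z M - w k) =
      (∑ k ∈ range b, x ^ k * w k) * (x * q / (x - 1) - (q + 1) / 2) +
        (b * (q * C - ∑ M ∈ range q, Z M) - q * ∑ k ∈ range b, w k) / (x - 1) := by
  have hx1' : x - 1 ≠ 0 := sub_ne_zero.mpr hx1
  have hsplit : ∀ k M, ((1 - M / q) * x ^ k + (1 - x ^ (k + 1)) / (x - 1)) * (C - Z M - w k) =
      x ^ k * ((1 - M / q) * (C - Z M)) + x ^ k * w k * ((M : K) / q - 1) +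
        (1 - x ^ (k + 1)) / (x - 1) * (C - Z M) -
        (w k / (x - 1) - x / (x - 1) * (x ^ k * w k)) := fun k M => by
    field_simp
    ring
  have hgauss : ∑ M ∈ range q, ((M : K) / q - 1) = -(q + 1) / 2 := by
    rw [sum_sub_distrib, ← sum_div, sum_range_natCast, sum_const, card_range, nsmul_eq_mul]
    field_simp
    ring
  simp only [hsplit, sum_add_distrib, sum_sub_distrib, ← mul_sum, ← sum_mul, sum_const, card_range,
    nsmul_eq_mul, ← sum_div, hgauss, geom_sum_eq_zero_of_pow_eq_one hx hx1,
    sum_range_one_sub_pow_succ_div hx hx1]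
  simp only [mul_left_comm _ (q : K), ← mul_sum]
  field_simp
  ring

end MixedSum

theorem exp_two_pi_I_mul_div_eq_pow (b ℓ : ℕ) :
    Complex.exp (2 * Real.pi * Complex.I * ℓ / b) =
      Complex.exp (2 * Real.pi * Complex.I / b) ^ ℓ := by
  rw [← Complex.exp_nat_mul]; ring_nf

theorem bexp_eq_pow (b ℓ k : ℕ) :
    bexp b ℓ k = Complex.exp (2 * Real.pi * Complex.I * ℓ / b) ^ k := by
  rw [bexp, ← Complex.exp_nat_mul]; ring_nf

theorem exp_two_pi_I_mul_div_pow_eq_one {b : ℕ} (hb : b ≠ 0) (ℓ : ℕ) :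
    Complex.exp (2 * Real.pi * Complex.I * ℓ / b) ^ b = 1 := by
  rw [exp_two_pi_I_mul_div_eq_pow, ← pow_mul, mul_comm ℓ b, pow_mul,
    (Complex.isPrimitiveRoot_exp b hb).pow_eq_one, one_pow]

theorem exp_two_pi_I_mul_div_ne_one {b ℓ : ℕ} (hℓ : ℓ ≠ 0) (hℓb : ℓ < b) :
    Complex.exp (2 * Real.pi * Complex.I * ℓ / b) ≠ 1 := by
  rw [exp_two_pi_I_mul_div_eq_pow]
  exact (Complex.isPrimitiveRoot_exp b (by omega)).pow_ne_one_of_pos_of_lt hℓ hℓb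

namespace IsDigitMaps

variable {b n : ℕ} {s : Fin n → ℕ → ℕ}

theorem sum_range_comp {M : Type*} [AddCommMonoid M] (hs : IsDigitMaps b n s) (i : Fin n)
    (f : ℕ → M) : ∑ v ∈ range b, f (s i v) = ∑ v ∈ range b, f v := by
  rcases hs i with h | h
  · exact sum_congr rfl fun v hv => by rw [h v (mem_range.mp hv)]
  · rw [← sum_range_reflect f b]
    exact sum_congr rfl fun v hv => by rw [h v (mem_range.mp hv)]

theorem sum_pow_mul {K : Type*} [Field K] {x : K} (hs : IsDigitMaps b n s) (i : Fin n)
    (hx : x ^ b = 1) (hx1 : x ≠ 1) :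
    ∑ k ∈ range b, x ^ k * (s i k : K) = b / (x - 1) ∨
      ∑ k ∈ range b, x ^ k * (s i k : K) = -(b / (x - 1)) := by
  rcases hs i with h | h
  · left
    rw [← sum_range_mul_pow_of_pow_eq_one hx hx1]
    exact sum_congr rfl fun k hk => by rw [h k (mem_range.mp hk), mul_comm]
  · right
    have hterm : ∀ k ∈ range b, x ^ k * (s i k : K) = ((b : K) - 1) * x ^ k - k * x ^ k :=
      fun k hk => by
        have hkb := mem_range.mp hk
        rw [h k hkb, Nat.cast_sub (by omega), Nat.cast_sub (by omega)]
        push_cast; ring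
    rw [sum_congr rfl hterm, sum_sub_distrib, ← mul_sum, geom_sum_eq_zero_of_pow_eq_one hx hx1,
      sum_range_mul_pow_of_pow_eq_one hx hx1]
    ring

theorem map_sub_add (hs : IsDigitMaps b n s) (i : Fin n) {v : ℕ} (hv : v < b) :
    s i (b - 1 - v) + s i v = b - 1 := by
  rcases hs i with h | h <;> rw [h _ (by omega), h v hv] <;> omega

end IsDigitMaps

theorem sum_range_mul_eq_sum_sum {M : Type*} [AddCommMonoid M] (p q : ℕ) (f : ℕ → M) :
    ∑ r ∈ range (p * q), f r = ∑ k ∈ range p, ∑ r ∈ range q, f (q * k + r) := by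
  induction p with
  | zero => simp
  | succ p ih => rw [Nat.succ_mul, sum_range_add, ih, sum_range_succ, mul_comm q p]

theorem pow_mul_add_lt_pow_add {b c j q r : ℕ} (hq : q < b ^ j) (hr : r < b ^ c) :
    b ^ c * q + r < b ^ (c + j) :=
  calc b ^ c * q + r < b ^ c * (q + 1) := by rw [mul_add_one]; omega
    _ ≤ b ^ c * b ^ j := Nat.mul_le_mul_left _ hq
    _ = b ^ (c + j) := (pow_add _ _ _).symm

section Digits

variable {b : ℕ} [NeZero b]

theorem pow_mul_add_div_pow_mod_of_lt {c q r i : ℕ} (hr : r < b ^ c) (hi : i < c) :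
    (b ^ c * q + r) / b ^ i % b = r / b ^ i % b := by
  obtain ⟨d, rfl⟩ : ∃ d, c = i + (d + 1) := ⟨c - i - 1, by omega⟩
  rw [show b ^ (i + (d + 1)) * q + r = b ^ i * (b * (b ^ d * q)) + r by ring,
    Nat.mul_add_div (Nat.pos_of_ne_zero (pow_ne_zero _ (NeZero.ne b))), Nat.mul_add_mod]

theorem pow_mul_add_div_pow_add {c q r : ℕ} (hr : r < b ^ c) (i : ℕ) :
    (b ^ c * q + r) / b ^ (c + i) = q / b ^ i := by
  rw [pow_add, ← Nat.div_div_eq_div_mul,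
    Nat.mul_add_div (Nat.pos_of_ne_zero (pow_ne_zero _ (NeZero.ne b))), Nat.div_eq_of_lt hr,
    add_zero]

end Digits

def digitsFin (b n N : ℕ) [NeZero b] : Fin n → Fin b := fun i => Fin.ofNat b (N / b ^ (i : ℕ))

section DigitsFin

variable {b n : ℕ} [NeZero b]

theorem digitsFin_eq_symm {N : ℕ} (hN : N < b ^ n) :
    digitsFin b n N = finFunctionFinEquiv.symm ⟨N, hN⟩ := by
  ext i
  simp [digitsFin]

theorem sum_range_digitsFin {M : Type*} [AddCommMonoid M] (f : (Fin n → Fin b) → M) :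
    ∑ N ∈ range (b ^ n), f (digitsFin b n N) = ∑ t, f t := by
  rw [← Fin.sum_univ_eq_sum_range (fun N => f (digitsFin b n N)),
    ← finFunctionFinEquiv.symm.sum_comp]
  exact sum_congr rfl fun N _ => by rw [digitsFin_eq_symm N.isLt]

theorem z1_eq_div (t : Fin n → Fin b) : z1 b n t = (finFunctionFinEquiv t : ℕ) / (b : ℝ) ^ n := by
  have hb : (b : ℝ) ≠ 0 := Nat.cast_ne_zero.mpr (NeZero.ne b)
  rw [finFunctionFinEquiv_apply, z1]
  push_cast
  rw [sum_div]
  refine sum_congr rfl fun i _ => ?_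
  rw [show (b : ℝ) ^ n = b ^ (n - i) * b ^ (i : ℕ) by rw [← pow_add, Nat.sub_add_cancel i.isLt.le]]
  field_simp

theorem z1_digitsFin {N : ℕ} (hN : N < b ^ n) : z1 b n (digitsFin b n N) = N / (b : ℝ) ^ n := by
  rw [z1_eq_div, digitsFin_eq_symm hN, Equiv.apply_symm_apply]

variable {c j q r : ℕ}

theorem digitsFin_pow_mul_add_castAdd (hr : r < b ^ c) (i : Fin c) :
    digitsFin b (c + j) (b ^ c * q + r) (Fin.castAdd j i) = digitsFin b c r i :=
  Fin.ext <| by simpa [digitsFin] using pow_mul_add_div_pow_mod_of_lt hr i.isLt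

theorem digitsFin_pow_mul_add_natAdd (hr : r < b ^ c) (i : Fin j) :
    digitsFin b (c + j) (b ^ c * q + r) (Fin.natAdd c i) = digitsFin b j q i :=
  Fin.ext <| by simp [digitsFin, pow_mul_add_div_pow_add hr]

theorem digitsFin_pow_mul_add_last (hr : r < b ^ c) (hq : q < b) :
    digitsFin b (c + 1) (b ^ c * q + r) (Fin.last c) = ⟨q, hq⟩ :=
  Fin.ext <| by simp [digitsFin, by simpa using pow_mul_add_div_pow_add (q := q) hr 0,
    Nat.mod_eq_of_lt hq]

end DigitsFin

theorem z2_nonneg {b n : ℕ} (s : Fin n → ℕ → ℕ) (t : Fin n → Fin b) : 0 ≤ z2 b n s t := by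
  unfold z2; positivity

section Z2

variable {b n : ℕ} [NeZero b] {s : Fin n → ℕ → ℕ}

theorem sum_sub_one_div_pow_succ (n : ℕ) :
    ∑ i : Fin n, ((b : ℝ) - 1) / (b : ℝ) ^ ((i : ℕ) + 1) = 1 - 1 / (b : ℝ) ^ n := by
  have hb : (b : ℝ) ≠ 0 := Nat.cast_ne_zero.mpr (NeZero.ne b)
  rw [Fin.sum_univ_eq_sum_range (fun i => ((b : ℝ) - 1) / (b : ℝ) ^ (i + 1))]
  induction n with
  | zero => simp
  | succ n ih =>
    rw [sum_range_succ, ih]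
    field_simp
    ring

theorem z2_rev_add_z2 (hs : IsDigitMaps b n s) (t : Fin n → Fin b) :
    z2 b n s (fun i => (t i).rev) + z2 b n s t = 1 - 1 / (b : ℝ) ^ n := by
  rw [z2, z2, ← sum_add_distrib, ← sum_sub_one_div_pow_succ]
  refine sum_congr rfl fun i _ => ?_
  have hv := (t i).isLt
  rw [← add_div, Fin.val_rev, show b - ((t i : ℕ) + 1) = b - 1 - t i by omega, ← Nat.cast_add,
    hs.map_sub_add i hv, Nat.cast_sub (by omega), Nat.cast_one]

theorem z2_le_one (hs : IsDigitMaps b n s) (t : Fin n → Fin b) : z2 b n s t ≤ 1 := by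
  have hpair := z2_rev_add_z2 hs t
  have hpos : 0 ≤ 1 / (b : ℝ) ^ n := by positivity
  linarith [z2_nonneg s fun i => (t i).rev]

theorem sum_z2 (hs : IsDigitMaps b n s) : ∑ t, z2 b n s t = ((b : ℝ) ^ n - 1) / 2 := by
  have hrev : ∑ t : Fin n → Fin b, z2 b n s (fun i => (t i).rev) = ∑ t, z2 b n s t :=
    (Equiv.piCongrRight fun _ => Fin.revPerm).sum_comp (z2 b n s)
  have hb : (b : ℝ) ^ n ≠ 0 := pow_ne_zero _ (Nat.cast_ne_zero.mpr (NeZero.ne b))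
  have hsum : ∑ t : Fin n → Fin b, (z2 b n s (fun i => (t i).rev) + z2 b n s t) = b ^ n - 1 := by
    simp [z2_rev_add_z2 hs]
  rw [sum_add_distrib, hrev] at hsum
  linarith

end Z2

section Box

variable {b : ℕ} [NeZero b]

theorem div_pow_mem_box_iff {c j m N : ℕ} :
    ((b : ℝ) ^ (-(j : ℤ)) * m ≤ N / (b : ℝ) ^ (c + j) ∧
      N / (b : ℝ) ^ (c + j) < (b : ℝ) ^ (-(j : ℤ)) * (m + 1)) ↔ N / b ^ c = m := by
  have hb : (0 : ℝ) < b := Nat.cast_pos.mpr (Nat.pos_of_ne_zero (NeZero.ne b))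
  have hscale : (N : ℝ) / (b : ℝ) ^ (c + j) = (b : ℝ) ^ (-(j : ℤ)) * (N / (b ^ c : ℕ)) := by
    rw [zpow_neg, zpow_natCast, pow_add]
    push_cast
    field_simp
  rw [hscale, mul_le_mul_iff_right₀ (zpow_pos hb _), mul_lt_mul_iff_right₀ (zpow_pos hb _),
    ← Nat.floor_eq_iff (by positivity), Nat.floor_div_eq_div]

theorem sum_filter_z1_mem_box {M : Type*} [AddCommMonoid M] {c j m : ℕ} (hm : m < b ^ j)
    (f : (Fin (c + j) → Fin b) → M) :
    ∑ t ∈ univ.filter (fun t => (b : ℝ) ^ (-(j : ℤ)) * m ≤ z1 b (c + j) t ∧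
        z1 b (c + j) t < (b : ℝ) ^ (-(j : ℤ)) * (m + 1)), f t =
      ∑ r ∈ range (b ^ c), f (digitsFin b (c + j) (b ^ c * m + r)) := by
  have hpos : 0 < b ^ c := Nat.pos_of_ne_zero (pow_ne_zero _ (NeZero.ne b))
  have hbox : (range (b ^ (c + j))).filter (fun N => (b : ℝ) ^ (-(j : ℤ)) * m ≤
      z1 b (c + j) (digitsFin b (c + j) N) ∧
        z1 b (c + j) (digitsFin b (c + j) N) < (b : ℝ) ^ (-(j : ℤ)) * (m + 1)) =
      Ico (b ^ c * m) (b ^ c * m + b ^ c) := by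
    ext N
    simp only [mem_filter, mem_range, mem_Ico]
    constructor
    · rintro ⟨hN, hbox⟩
      rw [z1_digitsFin hN, div_pow_mem_box_iff] at hbox
      have hdiv := Nat.div_add_mod N (b ^ c)
      have hmod := Nat.mod_lt N hpos
      rw [hbox] at hdiv
      generalize N % b ^ c = r at hdiv hmod
      omega
    · rintro ⟨hlo, hhi⟩
      have hN : N < b ^ (c + j) := by
        simpa [Nat.add_sub_cancel' hlo] using
          pow_mul_add_lt_pow_add hm (show N - b ^ c * m < b ^ c by omega)
      rw [z1_digitsFin hN, div_pow_mem_box_iff]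
      exact ⟨hN, Nat.div_eq_of_lt_le (by linarith) (by linarith)⟩
  rw [sum_filter, ← sum_range_digitsFin, ← sum_filter, hbox,
    sum_Ico_eq_sum_range, Nat.add_sub_cancel_left]

variable {g j m k M : ℕ}

theorem pow_succ_mul_z1_digitsFin (hm : m < b ^ j) (hk : k < b) (hM : M < b ^ g) :
    (b : ℝ) ^ (j + 1) * z1 b (g + 1 + j) (digitsFin b _ (b ^ (g + 1) * m + (b ^ g * k + M))) =
      ((b * m + k : ℕ) : ℝ) + M / (b : ℝ) ^ g := by
  have hb : (b : ℝ) ≠ 0 := Nat.cast_ne_zero.mpr (NeZero.ne b)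
  rw [z1_digitsFin (pow_mul_add_lt_pow_add hm (pow_mul_add_lt_pow_add (by rwa [pow_one]) hM))]
  push_cast
  field_simp
  ring

theorem kdig_z1_digitsFin (hm : m < b ^ j) (hk : k < b) (hM : M < b ^ g) :
    kdig b j (z1 b (g + 1 + j) (digitsFin b _ (b ^ (g + 1) * m + (b ^ g * k + M)))) = k := by
  have hb : (0 : ℝ) < b := Nat.cast_pos.mpr (Nat.pos_of_ne_zero (NeZero.ne b))
  have hfrac : (M : ℝ) / (b : ℝ) ^ g ∈ Set.Ico 0 1 :=
    ⟨by positivity, (div_lt_one (by positivity)).mpr (by exact_mod_cast hM)⟩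
  rw [kdig, pow_succ_mul_z1_digitsFin hm hk hM, Int.floor_natCast_add,
    Int.floor_eq_zero_iff.mpr hfrac, add_zero, Int.toNat_natCast, Nat.mul_add_mod,
    Nat.mod_eq_of_lt hk]

theorem z2_digitsFin_pow_mul_add (s : Fin (g + 1 + j) → ℕ → ℕ) (hk : k < b) (hM : M < b ^ g) :
    z2 b (g + 1 + j) s (digitsFin b _ (b ^ (g + 1) * m + (b ^ g * k + M))) =
      z2 b g (fun i => s (Fin.castAdd j i.castSucc)) (digitsFin b g M) +
        s (Fin.castAdd j (Fin.last g)) k / (b : ℝ) ^ (g + 1) +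
        z2 b j (fun i => s (Fin.natAdd (g + 1) i)) (digitsFin b j m) / (b : ℝ) ^ (g + 1) := by
  have hr : b ^ g * k + M < b ^ (g + 1) := pow_mul_add_lt_pow_add (by rwa [pow_one]) hM
  simp only [z2, Fin.sum_univ_add, Fin.sum_univ_castSucc, digitsFin_pow_mul_add_castAdd hr,
    digitsFin_pow_mul_add_natAdd hr, digitsFin_pow_mul_add_last hM hk,
    show ∀ i : Fin g, digitsFin b (g + 1) (b ^ g * k + M) i.castSucc = digitsFin b g M i from
      digitsFin_pow_mul_add_castAdd (j := 1) hM,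
    Fin.val_castAdd, Fin.val_castSucc, Fin.val_last, Fin.val_natAdd, sum_div]
  congr 1
  refine sum_congr rfl fun i _ => ?_
  rw [div_div, ← pow_add]
  ring_nf

end Box

theorem S13_eq_sum_sum {b g j m ℓ : ℕ} [NeZero b] (s : Fin (g + 1 + j) → ℕ → ℕ) (hm : m < b ^ j)
    {x : ℂ} (hbexp : ∀ k, bexp b ℓ k = x ^ k) (hx : x ^ b = 1) (hx1 : x ≠ 1) :
    S13 b (g + 1 + j) s j m ℓ = ∑ k ∈ range b, ∑ M ∈ range (b ^ g),
      ((1 - M / ((b ^ g : ℕ) : ℂ)) * x ^ k + (1 - x ^ (k + 1)) / (x - 1)) *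
        ((1 - ((z2 b j (fun i => s (Fin.natAdd (g + 1) i)) (digitsFin b j m) /
            (b : ℝ) ^ (g + 1) : ℝ) : ℂ)) -
          ((z2 b g (fun i => s (Fin.castAdd j i.castSucc)) (digitsFin b g M) : ℝ) : ℂ) -
          (s (Fin.castAdd j (Fin.last g)) k : ℂ) / (b : ℂ) ^ (g + 1)) := by
  rw [S13, sum_filter_z1_mem_box hm,
    show range (b ^ (g + 1)) = range (b * b ^ g) by rw [pow_succ'], sum_range_mul_eq_sum_sum]
  refine sum_congr rfl fun k hk => sum_congr rfl fun M hM => ?_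
  have hk := mem_range.mp hk
  have hM := mem_range.mp hM
  have hz1 := congrArg ((↑) : ℝ → ℂ) (pow_succ_mul_z1_digitsFin hm hk hM)
  simp only [kdig_z1_digitsFin hm hk hM, z2_digitsFin_pow_mul_add s hk hM, hbexp,
    sum_Icc_pow_of_pow_eq_one hx hx1 hk]
  push_cast at hz1 ⊢
  rw [hz1]
  ring

theorem sum_mixed_box_general (b n : ℕ) (hn : 1 ≤ n)
    (s : Fin n → ℕ → ℕ) (hs : IsDigitMaps b n s)
    (j₁ m₁ ℓ₁ : ℕ) (hj : j₁ ≤ n - 1) (hm₁ : m₁ < b ^ j₁)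
    (hℓ₁ : 1 ≤ ℓ₁) (hℓ₁' : ℓ₁ ≤ b - 1) :
    ∃ ε : ℝ, 0 ≤ ε ∧ ε * (b:ℝ) ^ ((n:ℤ) - j₁) ≤ b ∧
      (S13 b n s j₁ m₁ ℓ₁
          = ((b:ℂ) ^ ((n:ℤ) - j₁) * (1 - 2*(ε:ℂ)) - (b:ℂ) ^ ((j₁:ℤ) - n + 1)) /
              (2 * (Complex.exp (2 * Real.pi * Complex.I * ℓ₁ / b) - 1))
            + Complex.exp (2 * Real.pi * Complex.I * ℓ₁ / b) /
              (Complex.exp (2 * Real.pi * Complex.I * ℓ₁ / b) - 1) ^ 2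
       ∨ S13 b n s j₁ m₁ ℓ₁
          = ((b:ℂ) ^ ((n:ℤ) - j₁) * (1 - 2*(ε:ℂ)) + (b:ℂ) ^ ((j₁:ℤ) - n + 1)) /
              (2 * (Complex.exp (2 * Real.pi * Complex.I * ℓ₁ / b) - 1))
            - 1 / (Complex.exp (2 * Real.pi * Complex.I * ℓ₁ / b) - 1) ^ 2) := by
  obtain ⟨g, rfl⟩ : ∃ g, n = g + 1 + j₁ := ⟨n - 1 - j₁, by omega⟩
  have : NeZero b := ⟨by omega⟩
  set x := Complex.exp (2 * Real.pi * Complex.I * ℓ₁ / b)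
  have hx : x ^ b = 1 := exp_two_pi_I_mul_div_pow_eq_one (by omega) ℓ₁
  have hx1 : x ≠ 1 := exp_two_pi_I_mul_div_ne_one (by omega) (by omega)
  have hbC : (b : ℂ) ≠ 0 := by exact_mod_cast (by omega : b ≠ 0)
  have hexp : ((g + 1 + j₁ : ℕ) : ℤ) - j₁ = (g + 1 : ℕ) := by push_cast; ring
  have hexp' : (j₁ : ℤ) - (g + 1 + j₁ : ℕ) + 1 = -(g : ℤ) := by push_cast; ring
  refine ⟨z2 b j₁ (fun i => s (Fin.natAdd (g + 1) i)) (digitsFin b j₁ m₁) / (b : ℝ) ^ (g + 1),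
    div_nonneg (z2_nonneg _ _) (by positivity), ?_, ?_⟩
  · rw [hexp, zpow_natCast, div_mul_cancel₀ _ (pow_ne_zero _ (by exact_mod_cast NeZero.ne b))]
    exact (z2_le_one (fun i => hs _) _).trans (by exact_mod_cast (by omega : 1 ≤ b))
  · have hsumW : ∑ k ∈ range b, (s (Fin.castAdd j₁ (Fin.last g)) k : ℂ) = b * (b - 1) / 2 := by
      rw [hs.sum_range_comp _ (fun v => (v : ℂ)), sum_range_natCast]
    rw [S13_eq_sum_sum s hm₁ (bexp_eq_pow b ℓ₁) hx hx1,
      sum_range_sum_range_mixed_eq hx hx1 (by push_cast; exact pow_ne_zero _ hbC),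
      ← Complex.ofReal_sum, sum_range_digitsFin (z2 b g _), sum_z2 fun i => hs _]
    simp only [mul_div_assoc', ← sum_div, hsumW, hexp, hexp', zpow_natCast, zpow_neg]
    push_cast
    rcases hs.sum_pow_mul (Fin.castAdd j₁ (Fin.last g)) hx hx1 with h | h
    · left
      rw [h]
      field_simp
      ring
    · right
      rw [h]
      field_simp
      ring

/-- Lemma 4.10. -/
theorem sum_mixed_box (b n : ℕ) (hb : 2 ≤ b) (hn : 1 ≤ n)
    (s : Fin n → ℕ → ℕ) (hs : IsDigitMaps b n s)
    (j₁ m₁ ℓ₁ : ℕ) (hj : j₁ ≤ n - 1) (hm₁ : m₁ < b ^ j₁)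
    (hℓ₁ : 1 ≤ ℓ₁) (hℓ₁' : ℓ₁ ≤ b - 1) :
    ∃ ε : ℝ, 0 ≤ ε ∧ ε * (b:ℝ) ^ ((n:ℤ) - j₁) ≤ b ∧
      (S13 b n s j₁ m₁ ℓ₁
          = ((b:ℂ) ^ ((n:ℤ) - j₁) * (1 - 2*(ε:ℂ)) - (b:ℂ) ^ ((j₁:ℤ) - n + 1)) /
              (2 * (Complex.exp (2 * Real.pi * Complex.I * ℓ₁ / b) - 1))
            + Complex.exp (2 * Real.pi * Complex.I * ℓ₁ / b) /
              (Complex.exp (2 * Real.pi * Complex.I * ℓ₁ / b) - 1) ^ 2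
       ∨ S13 b n s j₁ m₁ ℓ₁
          = ((b:ℂ) ^ ((n:ℤ) - j₁) * (1 - 2*(ε:ℂ)) + (b:ℂ) ^ ((j₁:ℤ) - n + 1)) /
              (2 * (Complex.exp (2 * Real.pi * Complex.I * ℓ₁ / b) - 1))
            - 1 / (Complex.exp (2 * Real.pi * Complex.I * ℓ₁ / b) - 1) ^ 2) :=
  sum_mixed_box_general b n hn s hs j₁ m₁ ℓ₁ hj hm₁ hℓ₁ hℓ₁'
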